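/- Let C ⊆ F_2^n be a binary triorthogonal code (i.e., generated by the rows of a triorthogonal matrix). Then Hull(C) := C ∩ C^⊥ is contained in (C^{⋆2})^⊥, and consequently Hull(C) = C ∩ (C^{⋆2})^⊥. -/

import Mathlib

open Matrix

/-- A binary matrix is triorthogonal if every Schur (coordinatewise) product of two
distinct rows and of three pairwise distinct rows has even Hamming weight. -/
def Triorthogonal {m n : ℕ} (G : Matrix (Fin m) (Fin n) (ZMod 2)) : Prop :=
  (∀ i j : Fin m, i ≠ j → Even (hammingNorm (G i * G j))) ∧
  (∀ i j k : Fin m, i ≠ j → i ≠ k → j ≠ k → Even (hammingNorm (G i * G j * G k)))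

/-- The Schur square `C^{⋆2}` of a binary linear code. -/
def schurSquare {n : ℕ} (C : Submodule (ZMod 2) (Fin n → ZMod 2)) :
    Submodule (ZMod 2) (Fin n → ZMod 2) :=
  Submodule.span (ZMod 2) {x | ∃ c ∈ C, ∃ c' ∈ C, x = c * c'}

/-- The dual code `C^⊥`. -/
def dualCode {n : ℕ} (C : Submodule (ZMod 2) (Fin n → ZMod 2)) :
    Submodule (ZMod 2) (Fin n → ZMod 2) where
  carrier := {u | ∀ c ∈ C, dotProduct u c = 0}
  add_mem' := by
    intro a b ha hb c hc
    simp [add_dotProduct, ha c hc, hb c hc]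
  zero_mem' := by
    intro c hc
    simp
  smul_mem' := by
    intro r a ha c hc
    simp [smul_dotProduct, ha c hc]

/-- A binary code is triorthogonal if it has a triorthogonal generator matrix
(whose number of rows equals the dimension of the code). -/
def IsTriorthogonalCode {n : ℕ} (C : Submodule (ZMod 2) (Fin n → ZMod 2)) : Prop :=
  ∃ (m : ℕ) (G : Matrix (Fin m) (Fin n) (ZMod 2)), Triorthogonal G ∧
    Submodule.span (ZMod 2) (Set.range fun i => G i) = C ∧
    m = Module.finrank (ZMod 2) C

/-
Over `𝔽₂` every vector is idempotent for the Schur product, so `C ≤ C^{⋆2}` and hence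
`C ∩ (C^{⋆2})^⊥ ≤ C ∩ C^⊥`. Conversely, if `C` is spanned by the rows `gᵢ` of a triorthogonal
matrix, `C^{⋆2}` is spanned by the products `gᵢ gⱼ`. A diagonal product `gᵢ gᵢ = gᵢ` is orthogonal
to the hull because `gᵢ ∈ C`; for `i ≠ j`, the pair and triple conditions say exactly that
`gᵢ gⱼ` is orthogonal to every row `gₖ`, hence to all of `C`, in particular to the hull.
-/

open scoped Pointwise

lemma ZMod.two_mul_self (x : ZMod 2) : x * x = x := by
  fin_cases x <;> rfl

lemma Pi.zmodTwo_mul_self {ι : Type*} (v : ι → ZMod 2) : v * v = v :=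
  funext fun t => ZMod.two_mul_self (v t)

section

variable {ι : Type*} [Fintype ι]

lemma ZMod.two_dotProduct_eq_hammingNorm_mul (u v : ι → ZMod 2) :
    u ⬝ᵥ v = (hammingNorm (u * v) : ZMod 2) := by
  rw [dotProduct, hammingNorm, Finset.card_filter, Nat.cast_sum]
  refine Finset.sum_congr rfl fun t _ => ?_
  rcases (by decide : ∀ x : ZMod 2, x = 0 ∨ x = 1) (u t * v t) with h | h <;> simp [h]

lemma dotProduct_eq_zero_of_even_hammingNorm_mul {u v : ι → ZMod 2}
    (h : Even (hammingNorm (u * v))) : u ⬝ᵥ v = 0 := by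
  rw [ZMod.two_dotProduct_eq_hammingNorm_mul, ZMod.natCast_eq_zero_iff_even.2 h]

end

section

variable {n : ℕ}

lemma mem_dualCode_span_iff {S : Set (Fin n → ZMod 2)} {u : Fin n → ZMod 2} :
    u ∈ dualCode (Submodule.span (ZMod 2) S) ↔ ∀ s ∈ S, u ⬝ᵥ s = 0 := by
  refine ⟨fun hu s hs => hu s (Submodule.subset_span hs), fun hu c hc => ?_⟩
  induction hc using Submodule.span_induction with
  | mem s hs => exact hu s hs
  | zero => exact dotProduct_zero u
  | add a b _ _ ha hb => rw [dotProduct_add, ha, hb, add_zero]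
  | smul r a _ ha => rw [dotProduct_smul, ha, smul_zero]

lemma dualCode_anti {C D : Submodule (ZMod 2) (Fin n → ZMod 2)} (h : C ≤ D) :
    dualCode D ≤ dualCode C :=
  fun _ hu c hc => hu c (h hc)

lemma schurSquare_eq_mul (C : Submodule (ZMod 2) (Fin n → ZMod 2)) :
    schurSquare C = C * C := by
  rw [Submodule.mul_eq_span_mul_set, schurSquare]
  congr 1
  ext x
  simp [Set.mem_mul, eq_comm]

lemma schurSquare_span (S : Set (Fin n → ZMod 2)) :
    schurSquare (Submodule.span (ZMod 2) S) = Submodule.span (ZMod 2) (S * S) := by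
  rw [schurSquare_eq_mul, Submodule.span_mul_span]

lemma le_schurSquare (C : Submodule (ZMod 2) (Fin n → ZMod 2)) : C ≤ schurSquare C :=
  fun c hc => Submodule.subset_span ⟨c, hc, c, hc, (Pi.zmodTwo_mul_self c).symm⟩

end

namespace Triorthogonal

variable {m n : ℕ} {G : Matrix (Fin m) (Fin n) (ZMod 2)}

lemma mul_dotProduct_eq_zero (hG : Triorthogonal G) {i j : Fin m} (hij : i ≠ j) (k : Fin m) :
    (G i * G j) ⬝ᵥ G k = 0 := by
  apply dotProduct_eq_zero_of_even_hammingNorm_mul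
  by_cases hki : k = i
  · rw [hki, mul_right_comm, Pi.zmodTwo_mul_self]
    exact hG.1 i j hij
  by_cases hkj : k = j
  · rw [hkj, mul_assoc, Pi.zmodTwo_mul_self]
    exact hG.1 i j hij
  exact hG.2 i j k hij (Ne.symm hki) (Ne.symm hkj)

lemma mul_mem_dualCode (hG : Triorthogonal G) {i j : Fin m} (hij : i ≠ j) :
    G i * G j ∈ dualCode (Submodule.span (ZMod 2) (Set.range fun i => G i)) :=
  mem_dualCode_span_iff.2 <| by
    rintro _ ⟨k, rfl⟩
    exact hG.mul_dotProduct_eq_zero hij k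

theorem hull_le_dualCode_schurSquare (hG : Triorthogonal G)
    {C : Submodule (ZMod 2) (Fin n → ZMod 2)}
    (hC : Submodule.span (ZMod 2) (Set.range fun i => G i) = C) :
    C ⊓ dualCode C ≤ dualCode (schurSquare C) := by
  subst hC
  rintro u ⟨huC, huD⟩
  rw [schurSquare_span, mem_dualCode_span_iff]
  intro x hx
  obtain ⟨_, ⟨i, rfl⟩, _, ⟨j, rfl⟩, rfl⟩ := Set.mem_mul.1 hx
  by_cases hij : i = j
  · rw [hij, Pi.zmodTwo_mul_self]
    exact huD _ (Submodule.subset_span ⟨j, rfl⟩)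
  · rw [dotProduct_comm]
    exact hG.mul_mem_dualCode hij u huC

end Triorthogonal

theorem stmt4 {n : ℕ} (C : Submodule (ZMod 2) (Fin n → ZMod 2))
    (hC : IsTriorthogonalCode C) :
    C ⊓ dualCode C ≤ dualCode (schurSquare C) ∧
    C ⊓ dualCode C = C ⊓ dualCode (schurSquare C) := by
  obtain ⟨m, G, hG, hspan, -⟩ := hC
  have hull_le := hG.hull_le_dualCode_schurSquare hspan
  exact ⟨hull_le, le_antisymm (le_inf inf_le_left hull_le)
    (inf_le_inf_left _ (dualCode_anti (le_schurSquare _)))⟩
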